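/- arXiv:1111.1578 — 3 statements merged into one kernel-verified Lean document; each statement's English description precedes it below -/
import Mathlib

section
/- Let σ₀₁ and σ₁₀ be the morphisms from {A,B,C}* to {0,1}* with σ₀₁: A↦0, B↦01, C↦1 and σ₁₀: A↦0, B↦10, C↦1. If v⁽¹⁾, v⁽²⁾ ∈ {A,B,C}* satisfy σ₀₁(v⁽¹⁾) = σ₀₁(v⁽²⁾) and σ₁₀(v⁽¹⁾) = σ₁₀(v⁽²⁾), then v⁽¹⁾ = v⁽²⁾. -/
/-- `σ₀₁ : A ↦ 0, B ↦ 01, C ↦ 1` (letters `A,B,C` are `0,1,2 : Fin 3`). -/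
def sigma01 : Fin 3 → List (Fin 2) := ![[0], [0, 1], [1]]

/-- `σ₁₀ : A ↦ 0, B ↦ 10, C ↦ 1`. -/
def sigma10 : Fin 3 → List (Fin 2) := ![[0], [1, 0], [1]]

/-! The first letter of a word over `{A, B, C}` is read off from the first letters of its two
images: `σ₁₀` starts with `0` exactly on `A`, and `σ₀₁` starts with `1` exactly on `C`. Since no
letter has an empty image, both images determine their first letter, which can then be cancelled. -/

theorem List.head?_flatMap_cons_of_ne_nil {α β : Type*} {f : α → List β} {a : α}
    (h : f a ≠ []) (t : List α) : ((a :: t).flatMap f).head? = (f a).head? := by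
  rw [flatMap_cons, head?_append_of_ne_nil _ h]

theorem List.eq_of_flatMap_eq_of_head?_injective {α β : Type*} {f g : α → List β}
    (hf : ∀ a, f a ≠ []) (hg : ∀ a, g a ≠ [])
    (hhead : Function.Injective fun a => ((f a).head?, (g a).head?))
    {v w : List α} (hvf : v.flatMap f = w.flatMap f) (hvg : v.flatMap g = w.flatMap g) :
    v = w := by
  induction v generalizing w with
  | nil =>
    cases w with
    | nil => rfl
    | cons b s => simp [hf b] at hvf
  | cons a t ih =>
    cases w with
    | nil => simp [hf a] at hvf
    | cons b s =>
      have hab : a = b := hhead <| Prod.ext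
        ((head?_flatMap_cons_of_ne_nil (hf a) t).symm.trans <|
          (congrArg head? hvf).trans (head?_flatMap_cons_of_ne_nil (hf b) s))
        ((head?_flatMap_cons_of_ne_nil (hg a) t).symm.trans <|
          (congrArg head? hvg).trans (head?_flatMap_cons_of_ne_nil (hg b) s))
      subst hab
      rw [flatMap_cons, flatMap_cons] at hvf hvg
      rw [ih (append_cancel_left hvf) (append_cancel_left hvg)]

theorem stmt2 (v₁ v₂ : List (Fin 3))
    (h01 : v₁.flatMap sigma01 = v₂.flatMap sigma01)
    (h10 : v₁.flatMap sigma10 = v₂.flatMap sigma10) :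
    v₁ = v₂ := by
  refine List.eq_of_flatMap_eq_of_head?_injective ?_ ?_ ?_ h01 h10 <;> decide
end

section
/- Let x, y ∈ {0,1}* form a standard pair, i.e., (x,y) is obtained from (0,1) by finitely many applications of the operators L(x,y)=(x,xy) and R(x,y)=(yx,y). Then there exists a word v ∈ {0,1}* such that xy = v·01 and yx = v·10. -/
/-- Standard pairs of binary words: obtained from `(0,1)` by finitely many
applications of `L(x,y) = (x, xy)` and `R(x,y) = (yx, y)`. -/
inductive IsStandardPair : List (Fin 2) → List (Fin 2) → Prop
  | base : IsStandardPair [0] [1]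
  | L {x y : List (Fin 2)} : IsStandardPair x y → IsStandardPair x (x ++ y)
  | R {x y : List (Fin 2)} : IsStandardPair x y → IsStandardPair (y ++ x) y

/- If `xy = v·01` and `yx = v·10`, then `L` keeps this shape with `v` replaced by `xv`
(as `x·xy = x·v·01` and `xy·x = x·yx = x·v·10`), and `R` with `v` replaced by `yv`. -/
theorem stmt12 (x y : List (Fin 2)) (h : IsStandardPair x y) :
    ∃ v : List (Fin 2), x ++ y = v ++ [0, 1] ∧ y ++ x = v ++ [1, 0] := by
  induction h with
  | base => exact ⟨[], rfl, rfl⟩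
  | @L x y _ ih =>
    obtain ⟨v, hxy, hyx⟩ := ih
    exact ⟨x ++ v, by simp only [List.append_assoc, hxy], by simp only [List.append_assoc, hyx]⟩
  | @R x y _ ih =>
    obtain ⟨v, hxy, hyx⟩ := ih
    exact ⟨y ++ v, by simp only [List.append_assoc, hxy], by simp only [List.append_assoc, hyx]⟩
end

section
/- Let S be the two-interval exchange with slope p/N, gcd(p,N)=1, 0<p<N, and let w⁽ᵏ⁾ be the length-N coding of the orbit of k/N. Let b = k̄ − k with 0 ≤ b ≤ min{p, N−p}. Define I₀ = { i : w⁽ᵏ⁾ᵢ = 0 and w^{(k̄)}ᵢ = 1 } and I₁ = { i : w⁽ᵏ⁾ᵢ = 1 and w^{(k̄)}ᵢ = 0 } (indices taken in {0,…,N−1}, successor modulo N). Then #I₀ = #I₁ = b, and for every i ∈ I₀ one has i+1 ∈ I₁ (mod N). -/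
/-!
Write `Sⁱ(k/N) = rᵢ/N` with `rᵢ = (k - i p) mod N`. As `p` is a unit mod `N`, `i ↦ rᵢ` is a
bijection from `{0, …, N-1}` onto `{0, …, N-1}`, and passing from `k` to `k + b` rotates every
`rᵢ` by `b`. For `b ≤ min p (N - p)` the two letters disagree as `0 → 1` exactly when
`rᵢ ∈ [p - b, p)` and as `1 → 0` exactly when `rᵢ ∈ [N - b, N)`; both intervals contain `b`
residues, and `S` translates the first onto the second.
-/

/-- `i`-th letter of the coding word `w⁽ᵏ⁾` is `0` iff `(k - i·p) mod N < p`. -/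
def codeZero (p N : ℕ) (k : ℤ) (i : ℕ) : Prop :=
  (k - (i : ℤ) * p) % (N : ℤ) < (p : ℤ)

instance (p N : ℕ) (k : ℤ) (i : ℕ) : Decidable (codeZero p N k i) := by
  unfold codeZero; infer_instance

open Finset

/-- `rᵢ = N · Sⁱ(k/N)`. -/
def orbitNumerator (p N : ℕ) (k : ℤ) (i : ℕ) : ℤ := (k - i * p) % N

section

variable {p N : ℕ} {k : ℤ}

lemma orbitNumerator_nonneg (hN : 0 < N) (i : ℕ) : 0 ≤ orbitNumerator p N k i :=
  Int.emod_nonneg _ (by omega)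

lemma orbitNumerator_lt (hN : 0 < N) (i : ℕ) : orbitNumerator p N k i < N :=
  Int.emod_lt_of_pos _ (by omega)

lemma orbitNumerator_add (b : ℤ) (i : ℕ) :
    orbitNumerator p N (k + b) i = (orbitNumerator p N k i + b) % N := by
  rw [orbitNumerator, orbitNumerator, Int.emod_add_emod, sub_add_eq_add_sub]

lemma orbitNumerator_add_natCast (hN : 0 < N) {b : ℕ} (hbN : b ≤ N) (i : ℕ) :
    orbitNumerator p N (k + b) i =
      if orbitNumerator p N k i + b < N then orbitNumerator p N k i + b
      else orbitNumerator p N k i + b - N := by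
  have h0 := orbitNumerator_nonneg (p := p) (k := k) hN i
  have hlt := orbitNumerator_lt (p := p) (k := k) hN i
  rw [orbitNumerator_add]
  split_ifs with h
  · exact Int.emod_eq_of_lt (by omega) h
  · rw [Int.emod_eq_sub_self_emod, Int.emod_eq_of_lt (by omega) (by omega)]

lemma orbitNumerator_succ_mod_eq_emod (i : ℕ) :
    orbitNumerator p N k ((i + 1) % N) = (orbitNumerator p N k i - p) % N := by
  show _ ≡ _ [ZMOD N]
  calc k - (((i + 1) % N : ℕ) : ℤ) * p ≡ k - ((i + 1 : ℕ) : ℤ) * p [ZMOD N] := by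
        push_cast
        exact ((Int.mod_modEq _ _).mul_right _).sub_left _
    _ = (k - i * p) - p := by push_cast; ring
    _ ≡ orbitNumerator p N k i - p [ZMOD N] := ((Int.mod_modEq _ _).symm).sub_right _

lemma orbitNumerator_succ_mod (hN : 0 < N) (hpN : p ≤ N) (i : ℕ) :
    orbitNumerator p N k ((i + 1) % N) =
      if p ≤ orbitNumerator p N k i then orbitNumerator p N k i - p
      else orbitNumerator p N k i - p + N := by
  have h0 := orbitNumerator_nonneg (p := p) (k := k) hN i
  have hlt := orbitNumerator_lt (p := p) (k := k) hN i
  rw [orbitNumerator_succ_mod_eq_emod]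
  split_ifs
  · exact Int.emod_eq_of_lt (by omega) (by omega)
  · rw [Int.emod_eq_add_self_emod, Int.emod_eq_of_lt (by omega) (by omega)]

lemma injOn_orbitNumerator (hcop : Nat.Coprime p N) :
    Set.InjOn (orbitNumerator p N k) (range N) := by
  intro i hi j hj hij
  have hmul : ((i * p : ℕ) : ℤ) ≡ (j * p : ℕ) [ZMOD N] := by
    simpa using Int.ModEq.sub_left k hij
  exact ((Int.natCast_modEq_iff.1 hmul).cancel_right_of_coprime hcop.symm).eq_of_lt_of_lt
    (mem_range.1 hi) (mem_range.1 hj)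

lemma bijOn_orbitNumerator (hN : 0 < N) (hcop : Nat.Coprime p N) :
    Set.BijOn (orbitNumerator p N k) (range N) (Ico (0 : ℤ) N) := by
  have hmaps : Set.MapsTo (orbitNumerator p N k) (range N) (Ico (0 : ℤ) N) := fun i _ ↦
    mem_Ico.2 ⟨orbitNumerator_nonneg hN i, orbitNumerator_lt hN i⟩
  have hinj := injOn_orbitNumerator (k := k) hcop
  exact ⟨hmaps, hinj, surjOn_of_injOn_of_card_le _ hmaps hinj (by simp)⟩

lemma card_filter_orbitNumerator_mem (hN : 0 < N) (hcop : Nat.Coprime p N) {s : Finset ℤ}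
    (hs : s ⊆ Ico 0 N) : #{i ∈ range N | orbitNumerator p N k i ∈ s} = #s := by
  have hbij := bijOn_orbitNumerator (k := k) hN hcop
  refine card_nbij (orbitNumerator p N k) (fun i hi ↦ (mem_filter.1 hi).2)
    (hbij.injOn.mono fun i hi ↦ (mem_filter.1 hi).1) fun t ht ↦ ?_
  obtain ⟨i, hi, rfl⟩ := hbij.surjOn (hs ht)
  exact ⟨i, mem_filter.2 ⟨hi, ht⟩, rfl⟩

lemma codeZero_iff (i : ℕ) : codeZero p N k i ↔ orbitNumerator p N k i < p := Iff.rfl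

lemma codeZero_and_not_codeZero_add_iff (hN : 0 < N) {b : ℕ} (hbN : b + p ≤ N) (i : ℕ) :
    codeZero p N k i ∧ ¬ codeZero p N (k + b) i ↔
      orbitNumerator p N k i ∈ Ico ((p : ℤ) - b) p := by
  have h0 := orbitNumerator_nonneg (p := p) (k := k) hN i
  have hlt := orbitNumerator_lt (p := p) (k := k) hN i
  rw [codeZero_iff, codeZero_iff, orbitNumerator_add_natCast hN (by omega), mem_Ico]
  split_ifs <;> omega

lemma not_codeZero_and_codeZero_add_iff (hN : 0 < N) {b : ℕ} (hbp : b ≤ p) (hbN : b + p ≤ N)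
    (i : ℕ) :
    ¬ codeZero p N k i ∧ codeZero p N (k + b) i ↔
      orbitNumerator p N k i ∈ Ico ((N : ℤ) - b) N := by
  have hlt := orbitNumerator_lt (p := p) (k := k) hN i
  rw [codeZero_iff, codeZero_iff, orbitNumerator_add_natCast hN (by omega), mem_Ico]
  split_ifs <;> omega

end

theorem stmt16_general (p N : ℕ) (hpN : p < N) (hcop : Nat.Coprime p N)
    (k : ℤ) (b : ℕ) (hb : b ≤ min p (N - p)) (kbar : ℤ) (hkbar : kbar = k + b)
    (I₀ I₁ : Finset ℕ)
    (hI₀ : I₀ = (Finset.range N).filter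
      (fun i => codeZero p N k i ∧ ¬ codeZero p N kbar i))
    (hI₁ : I₁ = (Finset.range N).filter
      (fun i => ¬ codeZero p N k i ∧ codeZero p N kbar i)) :
    I₀.card = b ∧ I₁.card = b ∧ ∀ i ∈ I₀, (i + 1) % N ∈ I₁ := by
  subst hkbar hI₀ hI₁
  have hN : 0 < N := by omega
  have hbN : b + p ≤ N := by omega
  simp only [codeZero_and_not_codeZero_add_iff hN hbN,
    not_codeZero_and_codeZero_add_iff hN (by omega) hbN]
  refine ⟨?_, ?_, fun i hi ↦ ?_⟩
  · rw [card_filter_orbitNumerator_mem hN hcop (Ico_subset_Ico (by omega) (by omega)),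
      Int.card_Ico]
    omega
  · rw [card_filter_orbitNumerator_mem hN hcop (Ico_subset_Ico (by omega) le_rfl), Int.card_Ico]
    omega
  · rw [mem_filter, mem_Ico] at hi ⊢
    rw [mem_range, orbitNumerator_succ_mod hN hpN.le]
    refine ⟨Nat.mod_lt _ hN, ?_⟩
    split_ifs <;> omega

theorem stmt16 (p N : ℕ) (hp : 0 < p) (hpN : p < N) (hcop : Nat.Coprime p N)
    (k : ℤ) (b : ℕ) (hb : b ≤ min p (N - p)) (kbar : ℤ) (hkbar : kbar = k + b)
    (I₀ I₁ : Finset ℕ)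
    (hI₀ : I₀ = (Finset.range N).filter
      (fun i => codeZero p N k i ∧ ¬ codeZero p N kbar i))
    (hI₁ : I₁ = (Finset.range N).filter
      (fun i => ¬ codeZero p N k i ∧ codeZero p N kbar i)) :
    I₀.card = b ∧ I₁.card = b ∧ ∀ i ∈ I₀, (i + 1) % N ∈ I₁ :=
  stmt16_general p N hpN hcop k b hb kbar hkbar I₀ I₁ hI₀ hI₁
end
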